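/- For every M > 0 there exist N ≥ M, a linear thresholding system (J, θ) on N genes with all thresholds positive, and a point x ∈ {0,1}^N that is periodic for f_{(J,θ)} with minimal period greater than e^{√N}. -/

import Mathlib

/-- The map of a linear thresholding system `(J, θ)` on `{0,1}^N`:
`f(x)_i = 1` iff `(Jx)_i > θ_i`, where `x ∈ {0,1}^N` is viewed as a real vector. -/
noncomputable def ltsMap {N : ℕ} (J : Matrix (Fin N) (Fin N) ℝ) (θ : Fin N → ℝ)
    (x : Fin N → Bool) : Fin N → Bool :=
  fun i => if θ i < J.mulVec (fun j => if x j then (1 : ℝ) else 0) i then true else false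

/-!
The permutation matrix of `σ` with thresholds `1/2` acts on states by `x ↦ x ∘ σ`, and the state
marking the least point of every cycle of `σ` has minimal period exactly `orderOf σ`, the lcm of
the cycle lengths. On `N = (n + 1)^2` genes there is room for cycles of lengths
`2^⌊log₂ 2n⌋, 3, 5, …, 2n - 1`, whose lcm is a multiple of `lcm(1, …, 2n)`. Since every binomial
coefficient `C(2n, k)` divides `lcm(1, …, 2n)`, this lcm is at least `4^n / 2n`, which beats
`e^(n+1) = e^√N`.
-/

open Function

theorem Function.iterate_precomp {α β : Type*} (f : α → α) (m : ℕ) (x : α → β) :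
    (fun y : α → β => y ∘ f)^[m] x = x ∘ f^[m] := by
  induction m with
  | zero => rfl
  | succ m ih => rw [iterate_succ_apply', ih, iterate_succ]; rfl

namespace Equiv.Perm

variable {α : Type*} [Fintype α] [LinearOrder α]

def cycleMinMarking (σ : Perm α) : α → Bool :=
  fun a => decide (∀ b, σ.SameCycle a b → a ≤ b)

theorem pow_eq_one_of_comp_cycleMinMarking {σ : Perm α} {m : ℕ}
    (h : σ.cycleMinMarking ∘ ⇑(σ ^ m) = σ.cycleMinMarking) : σ ^ m = 1 := by
  have hmin : ∀ r, (∀ b, σ.SameCycle r b → r ≤ b) → (σ ^ m) r = r := by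
    intro r hr
    have hr' := congrFun h r
    simp only [comp_apply, cycleMinMarking, decide_eq_decide] at hr'
    have hsame : σ.SameCycle r ((σ ^ m) r) := sameCycle_pow_right.mpr (SameCycle.refl σ r)
    exact le_antisymm (hr'.mpr hr _ hsame.symm) (hr _ hsame)
  ext a
  obtain ⟨r, hr, hr_min⟩ :=
    (Finset.univ.filter (σ.SameCycle a)).exists_min_image id
      ⟨a, Finset.mem_filter.mpr ⟨Finset.mem_univ a, .refl σ a⟩⟩
  simp only [Finset.mem_filter, Finset.mem_univ, true_and, id] at hr hr_min
  obtain ⟨i, rfl⟩ := hr.symm.exists_nat_pow_eq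
  have hfix := hmin r fun b hb => hr_min b (hr.trans hb)
  rw [coe_one, id, ← mul_apply, pow_mul_comm, mul_apply, hfix]

theorem minimalPeriod_precomp_cycleMinMarking (σ : Perm α) :
    minimalPeriod (· ∘ σ) σ.cycleMinMarking = orderOf σ := by
  have hper : ∀ m, IsPeriodicPt (· ∘ σ) m σ.cycleMinMarking ↔ orderOf σ ∣ m := by
    intro m
    rw [orderOf_dvd_iff_pow_eq_one, IsPeriodicPt, IsFixedPt, iterate_precomp, ← coe_pow]
    exact ⟨pow_eq_one_of_comp_cycleMinMarking, fun h => by rw [h, coe_one, comp_id]⟩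
  exact Nat.dvd_antisymm (((hper _).mpr dvd_rfl).minimalPeriod_dvd)
    ((hper _).mp (isPeriodicPt_minimalPeriod _ _))

end Equiv.Perm

theorem ltsMap_permMatrix {N : ℕ} (σ : Equiv.Perm (Fin N)) {θ : Fin N → ℝ}
    (hθ₀ : ∀ i, 0 ≤ θ i) (hθ₁ : ∀ i, θ i < 1) :
    ltsMap (σ.permMatrix ℝ) θ = (· ∘ σ) := by
  funext y i
  simp only [ltsMap, Matrix.permMatrix_mulVec, comp_apply]
  cases y (σ i) <;> simp [(hθ₀ i).not_gt, hθ₁ i]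

theorem Nat.choose_dvd_lcm_Icc {n k : ℕ} (hk : k ≤ n) :
    n.choose k ∣ (Finset.Icc 1 n).lcm id := by
  have hpos := Nat.choose_pos hk
  have hlcm : (Finset.Icc 1 n).lcm id ≠ 0 := by
    simp [Finset.lcm_eq_zero_iff]
  rw [← Nat.factorization_le_iff_dvd hpos.ne' hlcm]
  intro p
  by_cases hp : p.Prime
  · refine Nat.factorization_choose_le_log.trans ?_
    rcases (Nat.log p n).eq_zero_or_pos with h | h
    · simp [h]
    · have hn : n ≠ 0 := by rintro rfl; simp at h
      refine (hp.pow_dvd_iff_le_factorization hlcm).mp (Finset.dvd_lcm ?_)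
      simp [Nat.one_le_pow _ _ hp.pos, Nat.pow_log_le_self p hn]
  · simp [Nat.factorization_eq_zero_of_not_prime _ hp]

theorem Nat.four_pow_le_mul_lcm_Icc {n : ℕ} (hn : 0 < n) :
    4 ^ n ≤ 2 * n * (Finset.Icc 1 (2 * n)).lcm id := by
  have hlcm : (Finset.Icc 1 (2 * n)).lcm id ≠ 0 := by
    simp [Finset.lcm_eq_zero_iff]
  calc 4 ^ n ≤ 2 * n * n.centralBinom := Nat.four_pow_le_two_mul_self_mul_centralBinom n hn
    _ ≤ _ := Nat.mul_le_mul_left _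
      (Nat.le_of_dvd (Nat.pos_of_ne_zero hlcm) (Nat.choose_dvd_lcm_Icc (by omega)))

theorem Nat.two_mul_mul_three_pow_lt_four_pow {n : ℕ} (hn : 16 ≤ n) :
    2 * n * 3 ^ (n + 1) < 4 ^ n := by
  induction n, hn using Nat.le_induction with
  | base => norm_num
  | succ n hn ih =>
    calc 2 * (n + 1) * 3 ^ (n + 1 + 1) = 3 * (2 * n * 3 ^ (n + 1)) + 6 * 3 ^ (n + 1) := by ring
      _ < 4 * 4 ^ n := by
        have : 6 * 3 ^ (n + 1) ≤ 2 * n * 3 ^ (n + 1) := Nat.mul_le_mul_right _ (by omega)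
        omega
      _ = 4 ^ (n + 1) := by ring

-- Every `b ≤ 2n` is a power of two `≤ 2n` times an odd number `< 2n`.
def blockLengths (n : ℕ) : Multiset ℕ :=
  2 ^ Nat.log 2 (2 * n) ::ₘ (Finset.Ico 1 n).val.map (fun j => 2 * j + 1)

theorem sum_blockLengths_le (n : ℕ) : (blockLengths n).sum ≤ (n + 1) ^ 2 := by
  have hpow : 2 ^ Nat.log 2 (2 * n) ≤ 2 * n + 1 := by
    rcases n.eq_zero_or_pos with rfl | hn
    · simp
    · exact (Nat.pow_log_le_self 2 (by omega)).trans (Nat.le_succ _)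
  have hodd : ∀ m, ∑ j ∈ Finset.range m, (2 * j + 1) = m ^ 2 := by
    intro m
    induction m with
    | zero => rfl
    | succ m ih => rw [Finset.sum_range_succ, ih]; ring
  have hsub : ∑ j ∈ Finset.Ico 1 n, (2 * j + 1) ≤ n ^ 2 :=
    hodd n ▸ Finset.sum_le_sum_of_subset (fun j => by simp)
  rw [blockLengths, Multiset.sum_cons, Finset.sum_map_val]
  nlinarith

theorem two_le_of_mem_blockLengths {n a : ℕ} (hn : 0 < n) (ha : a ∈ blockLengths n) :
    2 ≤ a := by
  simp only [blockLengths, Multiset.mem_cons, Multiset.mem_map, Finset.mem_val,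
    Finset.mem_Ico] at ha
  rcases ha with rfl | ⟨j, hj, rfl⟩
  · calc 2 = 2 ^ 1 := rfl
      _ ≤ _ := Nat.pow_le_pow_right two_pos (Nat.le_log_of_pow_le one_lt_two (by omega))
  · omega

theorem lcm_Icc_dvd_lcm_blockLengths (n : ℕ) :
    (Finset.Icc 1 (2 * n)).lcm id ∣ (blockLengths n).lcm := by
  refine Finset.lcm_dvd fun b hb => ?_
  rw [Finset.mem_Icc] at hb
  have hb0 : b ≠ 0 := by omega
  rw [id, ← Nat.ordProj_mul_ordCompl_eq_self b 2]
  set v := b.factorization 2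
  set u := b / 2 ^ v
  have hu_odd : ¬ 2 ∣ u := Nat.not_dvd_ordCompl Nat.prime_two hb0
  have hu_le : u ≤ 2 * n := (Nat.ordCompl_le b 2).trans hb.2
  have htwo : 2 ^ v ∣ (blockLengths n).lcm := by
    refine (pow_dvd_pow 2 ?_).trans (Multiset.dvd_lcm (Multiset.mem_cons_self _ _))
    exact Nat.le_log_of_pow_le one_lt_two
      ((Nat.le_of_dvd (by omega) (Nat.ordProj_dvd b 2)).trans hb.2)
  clear_value u
  have hodd : u ∣ (blockLengths n).lcm := by
    rcases Nat.lt_or_ge u 2 with hu | hu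
    · rw [show u = 1 by omega]
      exact one_dvd _
    · refine Multiset.dvd_lcm (Multiset.mem_cons_of_mem (Multiset.mem_map.mpr ⟨u / 2, ?_, ?_⟩))
      · simp only [Finset.mem_val, Finset.mem_Ico]
        omega
      · omega
  have hcop : Nat.Coprime (2 ^ v) u :=
    Nat.Coprime.pow_left _ (Nat.prime_two.coprime_iff_not_dvd.mpr hu_odd)
  exact hcop.mul_dvd_of_dvd_of_dvd htwo hodd

theorem Real.exp_add_one_lt_three_pow (n : ℕ) : Real.exp (n + 1) < 3 ^ (n + 1) := by
  calc Real.exp (n + 1) = Real.exp 1 ^ (n + 1) := by rw [Real.exp_one_pow]; push_cast; rfl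
    _ < 3 ^ (n + 1) := pow_lt_pow_left₀ Real.exp_one_lt_three (Real.exp_pos 1).le (by omega)

theorem exists_long_cycle_general (M : ℕ) :
    ∃ N : ℕ, M ≤ N ∧
      ∃ (J : Matrix (Fin N) (Fin N) ℝ) (θ : Fin N → ℝ),
        (∀ i, 0 < θ i) ∧
        ∃ x : Fin N → Bool,
          (∃ n, 0 < n ∧ (ltsMap J θ)^[n] x = x) ∧
          Real.exp (Real.sqrt N) < (Function.minimalPeriod (ltsMap J θ) x : ℝ) := by
  obtain ⟨n, hMn, hn⟩ : ∃ n, M ≤ n ∧ 16 ≤ n := ⟨max M 16, le_max_left _ _, le_max_right _ _⟩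
  obtain ⟨σ, hσ⟩ := (Equiv.Perm.exists_with_cycleType_iff (α := Fin ((n + 1) ^ 2))).mpr
    ⟨by simpa using sum_blockLengths_le n, fun _ => two_le_of_mem_blockLengths (by omega)⟩
  have hdvd : (Finset.Icc 1 (2 * n)).lcm id ∣ orderOf σ := by
    rw [← Equiv.Perm.lcm_cycleType, hσ]
    exact lcm_Icc_dvd_lcm_blockLengths n
  have horder : 3 ^ (n + 1) < orderOf σ := by
    refine Nat.lt_of_mul_lt_mul_left (a := 2 * n) ?_
    calc 2 * n * 3 ^ (n + 1) < 4 ^ n := Nat.two_mul_mul_three_pow_lt_four_pow hn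
      _ ≤ 2 * n * (Finset.Icc 1 (2 * n)).lcm id := Nat.four_pow_le_mul_lcm_Icc (by omega)
      _ ≤ 2 * n * orderOf σ := Nat.mul_le_mul_left _ (Nat.le_of_dvd (orderOf_pos σ) hdvd)
  refine ⟨(n + 1) ^ 2, hMn.trans (by nlinarith), σ.permMatrix ℝ, fun _ => 1 / 2,
    fun _ => by norm_num, σ.cycleMinMarking, ?_⟩
  rw [ltsMap_permMatrix σ (fun _ => by norm_num) (fun _ => by norm_num)]
  have hperiod := σ.minimalPeriod_precomp_cycleMinMarking
  refine ⟨⟨_, hperiod ▸ orderOf_pos σ, isPeriodicPt_minimalPeriod _ _⟩, ?_⟩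
  rw [hperiod]
  calc Real.exp (Real.sqrt ((n + 1) ^ 2 : ℕ)) = Real.exp (n + 1) := by
        push_cast
        rw [Real.sqrt_sq (by positivity)]
    _ < 3 ^ (n + 1) := Real.exp_add_one_lt_three_pow n
    _ < orderOf σ := by exact_mod_cast horder

/-- For every `M > 0` there exist `N ≥ M`, a linear thresholding system on `N` genes with
positive thresholds, and a periodic point whose minimal period exceeds `e^√N`. -/
theorem exists_long_cycle (M : ℕ) (hM : 0 < M) :
    ∃ N : ℕ, M ≤ N ∧
      ∃ (J : Matrix (Fin N) (Fin N) ℝ) (θ : Fin N → ℝ),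
        (∀ i, 0 < θ i) ∧
        ∃ x : Fin N → Bool,
          (∃ n, 0 < n ∧ (ltsMap J θ)^[n] x = x) ∧
          Real.exp (Real.sqrt N) < (Function.minimalPeriod (ltsMap J θ) x : ℝ) :=
  exists_long_cycle_general M
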